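/- Let r be an odd prime and let s, z be integers. If r² divides s² − 4z^r and r does not divide s, then r² divides s^r − 2^{r−1}·s. -/

import Mathlib

/-!
Write `A = s ^ r` and `B = 2 ^ (r - 1) * s`. Raising `s ^ 2 ≡ 4 z ^ r (mod r²)` to the `r`-th power
and using `(z ^ r) ^ r ≡ z ^ r (mod r²)` (Fermat's little theorem lifted one step) gives
`A² ≡ B² (mod r²)`. By Fermat again `A + B ≡ 2 s (mod r)`, which is prime to `r`, so all of `r²`
divides `A - B`.
-/

theorem dvd_sub_of_dvd_sq_sub_sq {R : Type*} [CommRing R] {p a b : R} {n : ℕ}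
    (hcop : IsCoprime p (a + b)) (h : p ^ n ∣ a ^ 2 - b ^ 2) : p ^ n ∣ a - b :=
  hcop.pow_left.dvd_of_dvd_mul_right (by rwa [mul_comm, ← sq_sub_sq])

namespace Int

theorem pow_prime_pow_prime_modEq {p : ℕ} (hp : p.Prime) (z : ℤ) :
    (z ^ p) ^ p ≡ z ^ p [ZMOD p ^ 2] := by
  have h := dvd_sub_pow_of_dvd_sub (ModEq.pow_prime_eq_self hp z).symm.dvd 1
  rw [pow_one] at h
  exact (modEq_iff_dvd.mpr h).symm

theorem ModEq.pow_prime_of_modEq_mul_pow {p : ℕ} (hp : p.Prime) {x c z : ℤ}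
    (h : x ≡ c * z ^ p [ZMOD p ^ 2]) : x ^ p ≡ c ^ (p - 1) * x [ZMOD p ^ 2] := by
  have hc : c ^ p = c ^ (p - 1) * c := by rw [← pow_succ, Nat.sub_add_cancel hp.one_le]
  calc x ^ p ≡ (c * z ^ p) ^ p [ZMOD p ^ 2] := h.pow p
    _ = c ^ (p - 1) * (c * (z ^ p) ^ p) := by rw [mul_pow, hc, mul_assoc]
    _ ≡ c ^ (p - 1) * (c * z ^ p) [ZMOD p ^ 2] :=
      ((pow_prime_pow_prime_modEq hp z).mul_left c).mul_left _
    _ ≡ c ^ (p - 1) * x [ZMOD p ^ 2] := h.symm.mul_left _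

theorem not_dvd_pow_prime_add_two_pow_mul {p : ℕ} (hp : p.Prime) (hodd : Odd p) {s : ℤ}
    (hs : ¬ (p : ℤ) ∣ s) : ¬ (p : ℤ) ∣ s ^ p + 2 ^ (p - 1) * s := by
  have hp' : Prime (p : ℤ) := Nat.prime_iff_prime_int.mp hp
  have htwo : ¬ (p : ℤ) ∣ 2 := by
    rw [show (2 : ℤ) = (2 : ℕ) by rfl, Int.natCast_dvd_natCast,
      Nat.prime_dvd_prime_iff_eq hp Nat.prime_two]
    rintro rfl
    exact Nat.not_odd_iff_even.mpr even_two hodd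
  have hmod : s ^ p + 2 ^ (p - 1) * s ≡ 2 * s [ZMOD p] := by
    have h2 := ModEq.pow_card_sub_one_eq_one hp ((hp'.coprime_iff_not_dvd.mpr htwo).symm)
    calc s ^ p + 2 ^ (p - 1) * s ≡ s + 1 * s [ZMOD p] :=
          (ModEq.pow_prime_eq_self hp s).add (h2.mul_right s)
      _ = 2 * s := by ring
  rw [hmod.dvd_iff]
  exact fun h ↦ (hp'.dvd_or_dvd h).elim htwo hs

end Int

/-- Lemma (srs): let `r` be an odd prime and `s, z` integers.  If `r ^ 2` divides
`s ^ 2 - 4 * z ^ r` and `r` does not divide `s`, then `r ^ 2` divides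
`s ^ r - 2 ^ (r - 1) * s`. -/
theorem stmt_12 (r : ℕ) (hr : r.Prime) (hodd : Odd r) (s z : ℤ)
    (h1 : (r : ℤ) ^ 2 ∣ s ^ 2 - 4 * z ^ r) (h2 : ¬ (r : ℤ) ∣ s) :
    (r : ℤ) ^ 2 ∣ s ^ r - 2 ^ (r - 1) * s := by
  have hsq : s ^ 2 ≡ 2 ^ 2 * z ^ r [ZMOD r ^ 2] := by
    rw [show (2 : ℤ) ^ 2 = 4 by norm_num]
    exact (Int.modEq_iff_dvd.mpr h1).symm
  have hpow : (r : ℤ) ^ 2 ∣ (s ^ r) ^ 2 - (2 ^ (r - 1) * s) ^ 2 := by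
    have := (Int.ModEq.pow_prime_of_modEq_mul_pow hr hsq).symm.dvd
    convert this using 1
    rw [mul_pow, ← pow_mul, ← pow_mul, ← pow_mul, ← pow_mul, mul_comm r, mul_comm (r - 1)]
  refine dvd_sub_of_dvd_sq_sub_sq ?_ hpow
  exact (Nat.prime_iff_prime_int.mp hr).coprime_iff_not_dvd.mpr
    (Int.not_dvd_pow_prime_add_two_pow_mul hr hodd h2)
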